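/- arXiv:2208.04065 — 6 statements merged into one kernel-verified Lean document; each statement's English description precedes it below -/
import Mathlib

section
/- The convex conjugate of φ(x) = α(|x|+β)ln(|x|/β + 1) − α|x| is φ*(θ) = αβ·exp(|θ|/α) − β|θ| − αβ, i.e., for every θ ∈ ℝ, sup_{x ∈ ℝ} (θx − φ(x)) = αβ·exp(|θ|/α) − β|θ| − αβ. -/
/-!
Since φ(x) = g(|x|) with g(t) = α(t+β)log(t/β+1) − αt (`logPenalty α β t`) and θx ≤ |θ||x|,
it suffices to bound st − g(t) for t ≥ 0. Writing T = t + β, the tangent-line inequality v + 1 ≤ exp v at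
v = s/α − log(T/β) gives exactly st − g(t) ≤ αβ exp(s/α) − βs − αβ, with equality when
T = β exp(s/α), i.e. at t = β(exp(s/α) − 1); taking x = ±t with the sign of θ attains the bound.
-/

open Real

noncomputable def logPenalty (α β t : ℝ) : ℝ :=
  α * (t + β) * log (t / β + 1) - α * t

lemma mul_sub_log_div_add_one_le_mul_exp {T β : ℝ} (hT : 0 < T) (hβ : 0 < β) (u : ℝ) :
    T * (u - log (T / β) + 1) ≤ β * exp u :=
  calc T * (u - log (T / β) + 1) ≤ T * exp (u - log (T / β)) :=
        mul_le_mul_of_nonneg_left (add_one_le_exp _) hT.le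
    _ = β * exp u := by
        rw [exp_sub, exp_log (div_pos hT hβ)]
        field_simp

section

variable {α β : ℝ}

lemma mul_sub_logPenalty_le (hα : 0 < α) (hβ : 0 < β) {t : ℝ} (ht : 0 < t + β) (s : ℝ) :
    s * t - logPenalty α β t ≤ α * β * exp (s / α) - β * s - α * β := by
  have hlog : log (t / β + 1) = log ((t + β) / β) := by
    rw [add_div, div_self hβ.ne']
  have key := mul_le_mul_of_nonneg_left
    (mul_sub_log_div_add_one_le_mul_exp ht hβ (s / α)) hα.le
  have hs : α * (s / α) = s := by field_simp
  unfold logPenalty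
  rw [hlog]
  linear_combination key - (t + β) * hs

lemma mul_sub_logPenalty_eq (hα : α ≠ 0) (hβ : β ≠ 0) (s : ℝ) :
    s * (β * (exp (s / α) - 1)) - logPenalty α β (β * (exp (s / α) - 1))
      = α * β * exp (s / α) - β * s - α * β := by
  have hlog : log (β * (exp (s / α) - 1) / β + 1) = s / α := by
    rw [mul_div_cancel_left₀ _ hβ, sub_add_cancel, log_exp]
  unfold logPenalty
  rw [hlog]
  field_simp
  ring

end

lemma exists_abs_eq_and_mul_eq_abs_mul (θ : ℝ) {m : ℝ} (hm : 0 ≤ m) :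
    ∃ x : ℝ, |x| = m ∧ θ * x = |θ| * m := by
  rcases le_total 0 θ with hθ | hθ
  · exact ⟨m, abs_of_nonneg hm, by rw [abs_of_nonneg hθ]⟩
  · exact ⟨-m, by rw [abs_neg, abs_of_nonneg hm], by rw [abs_of_nonpos hθ]; ring⟩

/-- The convex conjugate of φ(x) = α(|x|+β)ln(|x|/β + 1) − α|x| is
φ*(θ) = αβ·exp(|θ|/α) − β|θ| − αβ. -/
theorem stmt_2 (α β : ℝ) (hα : 0 < α) (hβ : 0 < β) (θ : ℝ) :
    (⨆ x : ℝ, (θ * x - (α * (|x| + β) * Real.log (|x| / β + 1) - α * |x|)))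
      = α * β * Real.exp (|θ| / α) - β * |θ| - α * β := by
  change ⨆ x : ℝ, θ * x - logPenalty α β |x| = _
  have bound : ∀ x : ℝ, θ * x - logPenalty α β |x|
      ≤ α * β * exp (|θ| / α) - β * |θ| - α * β := fun x =>
    calc θ * x - logPenalty α β |x| ≤ |θ| * |x| - logPenalty α β |x| :=
          sub_le_sub_right ((le_abs_self _).trans (abs_mul θ x).le) _
      _ ≤ _ := mul_sub_logPenalty_le hα hβ (by positivity) |θ|
  have hm : 0 ≤ β * (exp (|θ| / α) - 1) :=
    mul_nonneg hβ.le (sub_nonneg.mpr (one_le_exp (by positivity)))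
  obtain ⟨x₀, habs, hmul⟩ := exists_abs_eq_and_mul_eq_abs_mul θ hm
  have attained : θ * x₀ - logPenalty α β |x₀|
      = α * β * exp (|θ| / α) - β * |θ| - α * β := by
    rw [habs, hmul]
    exact mul_sub_logPenalty_eq hα.ne' hβ.ne' |θ|
  exact le_antisymm (ciSup_le bound) (attained ▸ le_ciSup ⟨_, Set.forall_mem_range.mpr bound⟩ x₀)
end

section
/- For every x ∈ ℝ^d with ‖x‖₁ ≤ D and every v ∈ ℝ^d, the quadratic form of the Hessian of ψ(x) = α·Σᵢ[(|xᵢ|+β)ln(|xᵢ|/β+1) − |xᵢ|] satisfies v^T ∇²ψ(x) v = α·Σᵢ vᵢ²/(|xᵢ|+β) ≥ (α/(D + dβ))·‖v‖₁². -/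
open Finset

/-- Sedrakyan's lemma with the total weight enlarged to `C`; no positivity of `C` is required,
since for `C = 0` the left side is `0` by the convention `a / 0 = 0`. -/
theorem Finset.sq_sum_div_le_sum_sq_div_of_sum_le {ι R : Type*} [Semifield R] [LinearOrder R]
    [IsStrictOrderedRing R] [ExistsAddOfLE R] (s : Finset ι) (f : ι → R) {g : ι → R} {C : R}
    (hg : ∀ i ∈ s, 0 < g i) (hC : ∑ i ∈ s, g i ≤ C) :
    (∑ i ∈ s, f i) ^ 2 / C ≤ ∑ i ∈ s, f i ^ 2 / g i := by
  have hg_sum : 0 ≤ ∑ i ∈ s, g i := sum_nonneg fun i hi ↦ (hg i hi).le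
  have hquot : 0 ≤ ∑ i ∈ s, f i ^ 2 / g i :=
    sum_nonneg fun i hi ↦ div_nonneg (sq_nonneg _) (hg i hi).le
  refine div_le_of_le_mul₀ (hg_sum.trans hC) hquot ?_
  calc (∑ i ∈ s, f i) ^ 2 ≤ (∑ i ∈ s, g i) * ∑ i ∈ s, f i ^ 2 / g i :=
        sum_sq_le_sum_mul_sum_of_sq_le_mul s (fun i hi ↦ (hg i hi).le)
          (fun i hi ↦ div_nonneg (sq_nonneg _) (hg i hi).le)
          (fun i hi ↦ (mul_div_cancel₀ _ (hg i hi).ne').ge)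
    _ ≤ C * ∑ i ∈ s, f i ^ 2 / g i := mul_le_mul_of_nonneg_right hC hquot
    _ = (∑ i ∈ s, f i ^ 2 / g i) * C := mul_comm _ _

theorem stmt_5_general (d : ℕ) (α β D : ℝ) (hα : 0 < α) (hβ : 0 < β)
    (x v : Fin d → ℝ) (hx : ∑ i, |x i| ≤ D) :
    α * ∑ i, (v i) ^ 2 / (|x i| + β) ≥ α / (D + d * β) * (∑ i, |v i|) ^ 2 := by
  have hweights : ∑ i, (|x i| + β) ≤ D + d * β := by
    simpa [sum_add_distrib] using hx
  have key := sq_sum_div_le_sum_sq_div_of_sum_le univ (fun i ↦ |v i|)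
    (fun i _ ↦ by positivity) hweights
  simp only [sq_abs] at key
  calc α / (D + d * β) * (∑ i, |v i|) ^ 2 = α * ((∑ i, |v i|) ^ 2 / (D + d * β)) := by ring
    _ ≤ α * ∑ i, (v i) ^ 2 / (|x i| + β) := by gcongr

/-- Hessian quadratic-form lower bound: for ‖x‖₁ ≤ D,
α·Σᵢ vᵢ²/(|xᵢ|+β) ≥ (α/(D + dβ))·‖v‖₁². -/
theorem stmt_5 (d : ℕ) (hd : 1 ≤ d) (α β D : ℝ) (hα : 0 < α) (hβ : 0 < β) (hD : 0 < D)
    (x v : Fin d → ℝ) (hx : ∑ i, |x i| ≤ D) :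
    α * ∑ i, (v i) ^ 2 / (|x i| + β) ≥ α / (D + d * β) * (∑ i, |v i|) ^ 2 :=
  stmt_5_general d α β D hα hβ x v hx
end

section
/- For positive reals a₁, …, aₙ, the inequalities √(Σ_{i=1}^n aᵢ) ≤ Σ_{i=1}^n aᵢ/√(Σ_{j=1}^i aⱼ) ≤ 2√(Σ_{i=1}^n aᵢ) hold. -/
/-! Writing `Sᵢ = a₁ + ⋯ + aᵢ`, each summand is `(Sᵢ - Sᵢ₋₁)/√Sᵢ = (√Sᵢ - √Sᵢ₋₁)(√Sᵢ + √Sᵢ₋₁)/√Sᵢ`,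
and the last factor lies in `[1, 2]`; the sum of the `√Sᵢ - √Sᵢ₋₁` telescopes to `√Sₙ`. -/

open Finset

namespace Real

variable {s t : ℝ}

theorem sqrt_eq_zero_of_le_of_sqrt_eq_zero (hst : s ≤ t) (ht : √t = 0) : √s = 0 := by
  linarith [sqrt_le_sqrt hst, sqrt_nonneg s]

theorem sqrt_sub_sqrt_le_sub_div_sqrt (hs : 0 ≤ s) (hst : s ≤ t) :
    √t - √s ≤ (t - s) / √t := by
  rcases (sqrt_nonneg t).eq_or_lt with ht | ht
  · simp [← ht, sqrt_eq_zero_of_le_of_sqrt_eq_zero hst ht.symm]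
  · rw [le_div_iff₀ ht]
    nlinarith [sq_sqrt hs, sq_sqrt (hs.trans hst), sqrt_nonneg s]

theorem sub_div_sqrt_le_two_mul_sqrt_sub_sqrt (hs : 0 ≤ s) (hst : s ≤ t) :
    (t - s) / √t ≤ 2 * (√t - √s) := by
  rcases (sqrt_nonneg t).eq_or_lt with ht | ht
  · simp [← ht, sqrt_eq_zero_of_le_of_sqrt_eq_zero hst ht.symm]
  · rw [div_le_iff₀ ht]
    nlinarith [sq_sqrt hs, sq_sqrt (hs.trans hst), sqrt_nonneg s, sqrt_le_sqrt hst]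

end Real

section Telescoping

variable {S : ℕ → ℝ} {n : ℕ}

theorem sqrt_sub_sqrt_le_sum_sub_div_sqrt (hS : ∀ i < n, 0 ≤ S i)
    (hmono : ∀ i < n, S i ≤ S (i + 1)) :
    √(S n) - √(S 0) ≤ ∑ i ∈ range n, (S (i + 1) - S i) / √(S (i + 1)) := by
  rw [← sum_range_sub (fun i ↦ √(S i))]
  refine sum_le_sum fun i hi ↦ ?_
  exact Real.sqrt_sub_sqrt_le_sub_div_sqrt (hS i (mem_range.mp hi)) (hmono i (mem_range.mp hi))

theorem sum_sub_div_sqrt_le_two_mul_sqrt_sub_sqrt (hS : ∀ i < n, 0 ≤ S i)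
    (hmono : ∀ i < n, S i ≤ S (i + 1)) :
    ∑ i ∈ range n, (S (i + 1) - S i) / √(S (i + 1)) ≤ 2 * (√(S n) - √(S 0)) := by
  rw [← sum_range_sub (fun i ↦ √(S i)), mul_sum]
  refine sum_le_sum fun i hi ↦ ?_
  exact Real.sub_div_sqrt_le_two_mul_sqrt_sub_sqrt (hS i (mem_range.mp hi))
    (hmono i (mem_range.mp hi))

end Telescoping

/-- For positive reals a₁, …, aₙ:
√(Σ aᵢ) ≤ Σᵢ aᵢ/√(Σ_{j≤i} aⱼ) ≤ 2√(Σ aᵢ). -/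
theorem stmt_8 (n : ℕ) (a : ℕ → ℝ) (ha : ∀ i < n, 0 < a i) :
    Real.sqrt (∑ i ∈ Finset.range n, a i)
        ≤ ∑ i ∈ Finset.range n, a i / Real.sqrt (∑ j ∈ Finset.range (i + 1), a j) ∧
    ∑ i ∈ Finset.range n, a i / Real.sqrt (∑ j ∈ Finset.range (i + 1), a j)
        ≤ 2 * Real.sqrt (∑ i ∈ Finset.range n, a i) := by
  set S : ℕ → ℝ := fun i ↦ ∑ j ∈ range i, a j
  have hS : ∀ i < n, 0 ≤ S i := fun i hi ↦
    sum_nonneg fun j hj ↦ (ha j ((mem_range.mp hj).trans hi)).le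
  have hmono : ∀ i < n, S i ≤ S (i + 1) := fun i hi ↦ by
    simpa [S, sum_range_succ] using (ha i hi).le
  have hsum : ∑ i ∈ range n, a i / √(∑ j ∈ range (i + 1), a j)
      = ∑ i ∈ range n, (S (i + 1) - S i) / √(S (i + 1)) :=
    sum_congr rfl fun i _ ↦ by simp [S, sum_range_succ]
  have hS0 : √(S 0) = 0 := by simp [S]
  have lower := sqrt_sub_sqrt_le_sum_sub_div_sqrt hS hmono
  have upper := sum_sub_div_sqrt_le_two_mul_sqrt_sub_sqrt hS hmono
  rw [hS0, sub_zero] at lower upper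
  rw [hsum]
  exact ⟨lower, upper⟩
end

section
/- Let ψ(x) = Σᵢ φ(xᵢ) with φ(x) = (|x|+β)ln(|x|/β+1) − |x| and β = 1/d. For any x, y in a convex set K ⊆ ℝ^d with ℓ₁-norm bounded by D, the Bregman divergence satisfies B_ψ(x, y) ≤ 4D(ln(D+1) + ln d). -/
/-!
The Bregman divergence is at most `ψ(x) - ⟨∇ψ(y), x - y⟩`, since `ψ ≥ 0`. Coordinatewise,
`φ(t) ≤ |t| · log(|t|/β + 1)` (from `β log(1 + |t|/β) ≤ |t|`) and `|φ'(t)| ≤ log(|t|/β + 1)`,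
and for `|t| ≤ D` and `β = 1/d` this logarithm is at most `log(D + 1) + log d`.
Summing over coordinates gives the bound `3D(log(D + 1) + log d)`.
-/

namespace ShiftedEntropy

open Finset Real

noncomputable def phi (β t : ℝ) : ℝ := (|t| + β) * log (|t| / β + 1) - |t|

noncomputable def phiDeriv (β t : ℝ) : ℝ := log (|t| / β + 1) * Real.sign t

variable {β : ℝ}

lemma log_abs_div_add_one_nonneg (hβ : 0 ≤ β) (t : ℝ) : 0 ≤ log (|t| / β + 1) :=
  log_nonneg (by linarith [div_nonneg (abs_nonneg t) hβ])

lemma phi_nonneg (hβ : 0 < β) (t : ℝ) : 0 ≤ phi β t := by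
  set u := |t| / β
  have hu : 0 ≤ u := div_nonneg (abs_nonneg t) hβ.le
  have hlog : 1 - (u + 1)⁻¹ ≤ log (u + 1) := one_sub_inv_le_log_of_pos (by linarith)
  have hkey : u ≤ (u + 1) * log (u + 1) := by
    have : 1 - (u + 1)⁻¹ = u / (u + 1) := by field_simp; ring
    rw [this, div_le_iff₀ (by linarith)] at hlog
    linarith
  have hscale : |t| + β = β * (u + 1) := by simp only [u]; field_simp
  have ht : |t| = β * u := by simp only [u]; field_simp
  rw [phi, sub_nonneg, hscale, mul_assoc]
  calc |t| = β * u := ht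
    _ ≤ β * ((u + 1) * log (u + 1)) := mul_le_mul_of_nonneg_left hkey hβ.le

lemma phi_le_abs_mul_log (hβ : 0 < β) (t : ℝ) : phi β t ≤ |t| * log (|t| / β + 1) := by
  have hlog : log (|t| / β + 1) ≤ |t| / β := by
    linarith [log_le_sub_one_of_pos (by positivity : 0 < |t| / β + 1)]
  have : β * log (|t| / β + 1) ≤ |t| := by
    rw [← le_div_iff₀' hβ]; exact hlog
  rw [phi]; linarith

lemma abs_phiDeriv_le (hβ : 0 ≤ β) (t : ℝ) : |phiDeriv β t| ≤ log (|t| / β + 1) := by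
  have hsign : |Real.sign t| ≤ 1 := by
    rcases Real.sign_apply_eq t with h | h | h <;> simp [h]
  rw [phiDeriv, abs_mul, abs_of_nonneg (log_abs_div_add_one_nonneg hβ t)]
  exact mul_le_of_le_one_right (log_abs_div_add_one_nonneg hβ t) hsign

lemma log_abs_div_one_div_add_one_le {d : ℕ} (hd : 1 ≤ d) {t D : ℝ} (ht : |t| ≤ D) :
    log (|t| / (1 / (d : ℝ)) + 1) ≤ log (D + 1) + log d := by
  have hd' : (1 : ℝ) ≤ d := by exact_mod_cast hd
  rw [div_div_eq_mul_div, div_one, ← log_mul (by linarith [abs_nonneg t]) (by positivity)]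
  apply log_le_log (by positivity)
  nlinarith [abs_nonneg t]

variable {ι : Type*} [Fintype ι]

lemma bregman_le (hβ : 0 < β) {M : ℝ} (x y : ι → ℝ)
    (hx : ∀ i, log (|x i| / β + 1) ≤ M) (hy : ∀ i, log (|y i| / β + 1) ≤ M) :
    ∑ i, phi β (x i) - ∑ i, phi β (y i) - ∑ i, phiDeriv β (y i) * (x i - y i)
      ≤ M * (2 * ∑ i, |x i| + ∑ i, |y i|) := by
  have hψx : ∑ i, phi β (x i) ≤ M * ∑ i, |x i| := by
    rw [mul_sum]
    refine sum_le_sum fun i _ => (phi_le_abs_mul_log hβ (x i)).trans ?_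
    rw [mul_comm]
    exact mul_le_mul_of_nonneg_right (hx i) (abs_nonneg _)
  have hψy : 0 ≤ ∑ i, phi β (y i) := sum_nonneg fun i _ => phi_nonneg hβ (y i)
  have hgrad : -∑ i, phiDeriv β (y i) * (x i - y i) ≤ M * (∑ i, |x i| + ∑ i, |y i|) := by
    rw [← sum_neg_distrib, ← sum_add_distrib, mul_sum]
    refine sum_le_sum fun i _ => ?_
    calc -(phiDeriv β (y i) * (x i - y i))
        ≤ |phiDeriv β (y i)| * |x i - y i| := by rw [← abs_mul]; exact neg_le_abs _
      _ ≤ M * (|x i| + |y i|) :=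
        mul_le_mul ((abs_phiDeriv_le hβ.le (y i)).trans (hy i)) (abs_sub _ _)
          (abs_nonneg _) ((log_abs_div_add_one_nonneg hβ.le (y i)).trans (hy i))
  linarith

end ShiftedEntropy

open ShiftedEntropy in
theorem stmt_10_general (d : ℕ) (hd : 1 ≤ d) (D : ℝ)
    (K : Set (Fin d → ℝ)) (hbound : ∀ z ∈ K, ∑ i, |z i| ≤ D)
    (x y : Fin d → ℝ) (hx : x ∈ K) (hy : y ∈ K) :
    (∑ i, ((|x i| + 1 / (d : ℝ)) * Real.log (|x i| / (1 / (d : ℝ)) + 1) - |x i|))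
      - (∑ i, ((|y i| + 1 / (d : ℝ)) * Real.log (|y i| / (1 / (d : ℝ)) + 1) - |y i|))
      - ∑ i, Real.log (|y i| / (1 / (d : ℝ)) + 1) * Real.sign (y i) * (x i - y i)
    ≤ 4 * D * (Real.log (D + 1) + Real.log d) := by
  have hxD := hbound x hx
  have hyD := hbound y hy
  have coord_le {z : Fin d → ℝ} (hz : ∑ i, |z i| ≤ D) (i : Fin d) : |z i| ≤ D :=
    (Finset.single_le_sum (fun j _ => abs_nonneg (z j)) (Finset.mem_univ i)).trans hz
  have hD : 0 ≤ D := (Finset.sum_nonneg fun i _ => abs_nonneg (x i)).trans hxD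
  have hL : 0 ≤ Real.log (D + 1) + Real.log d :=
    add_nonneg (Real.log_nonneg (by linarith)) (Real.log_nonneg (by exact_mod_cast hd))
  have hB := bregman_le (β := 1 / (d : ℝ)) (by positivity) x y
    (fun i => log_abs_div_one_div_add_one_le hd (coord_le hxD i))
    (fun i => log_abs_div_one_div_add_one_le hd (coord_le hyD i))
  calc _ ≤ (Real.log (D + 1) + Real.log d) * (2 * ∑ i, |x i| + ∑ i, |y i|) := hB
    _ ≤ 4 * D * (Real.log (D + 1) + Real.log d) := by nlinarith

/-- With β = 1/d, the Bregman divergence of ψ(x) = Σᵢ[(|xᵢ|+β)ln(|xᵢ|/β+1) − |xᵢ|]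
on an ℓ₁ ball of radius D is bounded by 4D(ln(D+1) + ln d). -/
theorem stmt_10 (d : ℕ) (hd : 1 ≤ d) (D : ℝ) (hD : 0 < D)
    (K : Set (Fin d → ℝ)) (hK : Convex ℝ K) (hbound : ∀ z ∈ K, ∑ i, |z i| ≤ D)
    (x y : Fin d → ℝ) (hx : x ∈ K) (hy : y ∈ K) :
    (∑ i, ((|x i| + 1 / (d : ℝ)) * Real.log (|x i| / (1 / (d : ℝ)) + 1) - |x i|))
      - (∑ i, ((|y i| + 1 / (d : ℝ)) * Real.log (|y i| / (1 / (d : ℝ)) + 1) - |y i|))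
      - ∑ i, Real.log (|y i| / (1 / (d : ℝ)) + 1) * Real.sign (y i) * (x i - y i)
    ≤ 4 * D * (Real.log (D + 1) + Real.log d) :=
  stmt_10_general d hd D K hbound x y hx hy
end

section
/- Let a, b > 0 and c ∈ ℝ. The unique nonnegative solution x of the equation ln(x/a + 1) + b·x + c = 0, when c < 0, is x = (1/b)·W₀(ab·exp(ab − c)) − a, where W₀ is the principal branch of the Lambert W function. -/
/-!
With `t = b (x + a)` the equation `log (x / a + 1) + b x + c = 0` becomes
`log t + t = log (a b) + a b - c`, i.e. `t eᵗ = a b e^(a b - c)`, which `t = W₀ (a b e^(a b - c))`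
solves. Since `t ↦ t eᵗ` is strictly increasing on `[0, ∞)`, this is the only solution with
`t ≥ 0`, and `x ≥ 0` because `a b e^(a b) < a b e^(a b - c)` forces `t > a b` when `c < 0`.
-/

open Real Set

theorem strictMonoOn_mul_exp : StrictMonoOn (fun t : ℝ => t * exp t) (Ici 0) := by
  intro s hs t _ hst
  calc s * exp s ≤ s * exp t := mul_le_mul_of_nonneg_left (exp_le_exp.mpr hst.le) hs
    _ < t * exp t := mul_lt_mul_of_pos_right hst (exp_pos t)

theorem log_div_add_one_add_mul_add_eq_zero_iff {a b c x : ℝ} (ha : 0 < a) (hb : 0 < b)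
    (hx : 0 < x + a) :
    log (x / a + 1) + b * x + c = 0 ↔
      b * (x + a) * exp (b * (x + a)) = a * b * exp (a * b - c) := by
  have hab : 0 < a * b := mul_pos ha hb
  have ht : 0 < b * (x + a) := mul_pos hb hx
  have hlog_div : log (x / a + 1) = log (b * (x + a)) - log (a * b) := by
    rw [← log_div ht.ne' hab.ne']
    congr 1
    field_simp
  rw [← (log_injOn_pos.eq_iff (mul_pos ht (exp_pos _)) (mul_pos hab (exp_pos _))),
    log_mul ht.ne' (exp_ne_zero _), log_mul hab.ne' (exp_ne_zero _), log_exp, log_exp, hlog_div]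
  constructor <;> intro h <;> linarith

/-- For a, b > 0 and c < 0, the unique nonnegative solution of
ln(x/a + 1) + bx + c = 0 is x = (1/b)·W₀(ab·exp(ab − c)) − a, where W₀ is the
principal branch of the Lambert W function (here given axiomatically on [0,∞)). -/
theorem stmt_12 (a b c : ℝ) (ha : 0 < a) (hb : 0 < b) (hc : c < 0)
    (W : ℝ → ℝ) (hW : ∀ y ≥ (0 : ℝ), 0 ≤ W y ∧ W y * Real.exp (W y) = y) :
    0 ≤ 1 / b * W (a * b * Real.exp (a * b - c)) - a ∧
    Real.log ((1 / b * W (a * b * Real.exp (a * b - c)) - a) / a + 1)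
        + b * (1 / b * W (a * b * Real.exp (a * b - c)) - a) + c = 0 ∧
    ∀ x' ≥ (0 : ℝ), Real.log (x' / a + 1) + b * x' + c = 0 →
        x' = 1 / b * W (a * b * Real.exp (a * b - c)) - a := by
  set y := a * b * exp (a * b - c)
  obtain ⟨hw, hwy⟩ := hW y (by positivity)
  set w := W y
  have hab : 0 ≤ a * b := by positivity
  have hab_lt_w : a * b < w := by
    refine (strictMonoOn_mul_exp.lt_iff_lt hab hw).mp ?_
    show a * b * exp (a * b) < w * exp w
    rw [hwy]
    exact mul_lt_mul_of_pos_left (exp_lt_exp.mpr (by linarith)) (by positivity)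
  have hw_eq : b * (1 / b * w - a + a) = w := by field_simp; ring
  have hx : 0 ≤ 1 / b * w - a := by
    rw [← mul_le_mul_iff_of_pos_left hb]
    linarith
  refine ⟨hx, ?_, fun x' hx' hx'_eq => ?_⟩
  · rw [log_div_add_one_add_mul_add_eq_zero_iff ha hb (by linarith), hw_eq, hwy]
  · rw [log_div_add_one_add_mul_add_eq_zero_iff ha hb (by linarith)] at hx'_eq
    have hbx' : b * (x' + a) = w :=
      strictMonoOn_mul_exp.injOn (mem_Ici.mpr (by positivity)) (mem_Ici.mpr hw)
        (hx'_eq.trans hwy.symm)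
    rw [← hbx']
    field_simp
    ring
end

section
/- Let y ∈ ℝ^d with all yᵢ ≥ 0 and Σᵢ yᵢ > D > 0, and β > 0. The minimizer x* of Σᵢ[(xᵢ+β)ln((xᵢ+β)/(yᵢ+β)) − xᵢ] over the set {x ∈ ℝ^d : Σᵢ xᵢ = D, xᵢ ≥ 0} restricted to its support satisfies xᵢ* + β = (yᵢ + β)/z for a common constant z > 0 whenever xᵢ* > 0, and xᵢ* = max{(yᵢ+β)/z − β, 0}. -/
/-!
The objective is separable and each summand is convex, so a feasible point is a minimizer as
soon as all summands share a supporting slope there (a Lagrange multiplier for `∑ xᵢ = D`).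
The derivative of `(t + β) log ((t + β) / c) - t` is `log ((t + β) / c)`, which equals `-log z`
exactly at `t + β = c / z`; clipping at `0` only raises the slope, which is harmless because
`xᵢ ≥ 0`. The level `z` is found by the intermediate value theorem, since
`z ↦ ∑ i, max ((yᵢ + β) / z - β) 0` is continuous, equals `∑ yᵢ > D` at `z = 1` and is at most
`∑ (yᵢ + β) / z`.
-/

open Real Finset

theorem Finset.sum_le_sum_of_add_mul_sub_le {ι R : Type*} [CommRing R] [PartialOrder R]
    [IsOrderedAddMonoid R] (s : Finset ι) {f : ι → R → R} {m x : ι → R} (μ : R)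
    (h : ∀ i ∈ s, f i (m i) + μ * (x i - m i) ≤ f i (x i))
    (hmx : ∑ i ∈ s, m i = ∑ i ∈ s, x i) :
    ∑ i ∈ s, f i (m i) ≤ ∑ i ∈ s, f i (x i) :=
  calc ∑ i ∈ s, f i (m i) = ∑ i ∈ s, (f i (m i) + μ * (x i - m i)) := by
        rw [sum_add_distrib, ← mul_sum, sum_sub_distrib, hmx, sub_self, mul_zero, add_zero]
    _ ≤ ∑ i ∈ s, f i (x i) := sum_le_sum h

theorem exists_sum_max_div_sub_eq {ι : Type*} [Fintype ι] {β D : ℝ} (hβ : 0 ≤ β) (hD : 0 < D)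
    {c : ι → ℝ} (hc : ∀ i, 0 ≤ c i) (hcD : D ≤ ∑ i, max (c i - β) 0) :
    ∃ z ≥ 1, ∑ i, max (c i / z - β) 0 = D := by
  set g : ℝ → ℝ := fun z => ∑ i, max (c i / z - β) 0
  have hg_le (z : ℝ) (hz : 0 < z) : g z ≤ (∑ i, c i) / z := by
    rw [sum_div]
    exact sum_le_sum fun i _ => max_le (by linarith) (div_nonneg (hc i) hz.le)
  have hDc : D ≤ ∑ i, c i :=
    hcD.trans (sum_le_sum fun i _ => max_le (by linarith) (hc i))
  set Z := (∑ i, c i) / D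
  have hZ1 : 1 ≤ Z := (one_le_div hD).2 hDc
  have hgZ : g Z ≤ D := by
    simpa [Z, div_div_cancel₀ (hD.trans_le hDc).ne'] using hg_le Z (by linarith)
  have hcont : ContinuousOn g (Set.Icc 1 Z) :=
    continuousOn_finsetSum _ fun i _ =>
      ((continuousOn_const.div continuousOn_id fun w (hw : w ∈ Set.Icc 1 Z) =>
        (by linarith [hw.1] : w ≠ 0)).sub continuousOn_const).sup continuousOn_const
  obtain ⟨z, hz, hgz⟩ :=
    intermediate_value_Icc' hZ1 hcont ⟨hgZ, by simpa [g] using hcD⟩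
  exact ⟨z, hz.1, hgz⟩

noncomputable def klTerm (β c t : ℝ) : ℝ := (t + β) * log ((t + β) / c) - t

theorem klTerm_add_log_mul_sub_le {β c s t : ℝ} (hc : c ≠ 0) (hs : 0 < s + β) (ht : 0 < t + β) :
    klTerm β c s + log ((s + β) / c) * (t - s) ≤ klTerm β c t := by
  have hlog : log ((t + β) / c) = log ((s + β) / c) + log ((t + β) / (s + β)) := by
    rw [log_div ht.ne' hc, log_div hs.ne' hc, log_div ht.ne' hs.ne']
    ring
  have hratio : (t + β) - (s + β) ≤ (t + β) * log ((t + β) / (s + β)) := by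
    have := one_sub_inv_le_log_of_pos (div_pos ht hs)
    rw [inv_div] at this
    calc (t + β) - (s + β) = (t + β) * (1 - (s + β) / (t + β)) := by field_simp
      _ ≤ _ := mul_le_mul_of_nonneg_left this ht.le
  simp only [klTerm, hlog]
  linarith

theorem klTerm_max_add_neg_log_mul_sub_le {β c z t : ℝ} (hβ : 0 < β) (hc : 0 < c) (hz : 0 < z)
    (ht : 0 ≤ t) :
    klTerm β c (max (c / z - β) 0) + -log z * (t - max (c / z - β) 0) ≤ klTerm β c t := by
  set m := max (c / z - β) 0
  have hm : 0 < m + β := by positivity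
  refine le_trans ?_ (klTerm_add_log_mul_sub_le hc.ne' hm (by linarith))
  gcongr klTerm β c m + ?_
  rcases le_total β (c / z) with hcz | hcz
  · have hmβ : m + β = c / z := by rw [show m = c / z - β from max_eq_left (by linarith)]; ring
    rw [hmβ, div_div_cancel_left' hc.ne', log_inv]
  · have hm0 : m = 0 := max_eq_right (by linarith)
    have hslope : -log z ≤ log (β / c) := by
      rw [← log_inv]
      exact log_le_log (by positivity) (by rw [le_div_iff₀ hc, inv_mul_eq_div]; exact hcz)
    rw [hm0, zero_add, sub_zero]
    exact mul_le_mul_of_nonneg_right hslope ht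

/-- KKT characterization of the minimizer of the Bregman projection onto the simplex:
there is z > 0 with x*ᵢ = max{(yᵢ+β)/z − β, 0} feasible and minimizing. -/
theorem stmt_13 (d : ℕ) (D β : ℝ) (hD : 0 < D) (hβ : 0 < β)
    (y : Fin d → ℝ) (hy : ∀ i, 0 ≤ y i) (hsum : D < ∑ i, y i) :
    ∃ z > (0 : ℝ),
      (∑ i, max ((y i + β) / z - β) 0 = D) ∧
      ∀ x : Fin d → ℝ, (∀ i, 0 ≤ x i) → (∑ i, x i = D) →
        ∑ i, ((max ((y i + β) / z - β) 0 + β)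
              * Real.log ((max ((y i + β) / z - β) 0 + β) / (y i + β))
              - max ((y i + β) / z - β) 0)
          ≤ ∑ i, ((x i + β) * Real.log ((x i + β) / (y i + β)) - x i) := by
  have hyβ (i : Fin d) : 0 < y i + β := by linarith [hy i]
  have hD_le : D ≤ ∑ i, max (y i + β - β) 0 := by
    simpa [max_eq_left (hy _)] using hsum.le
  obtain ⟨z, hz1, hz⟩ := exists_sum_max_div_sub_eq hβ.le hD (fun i => (hyβ i).le) hD_le
  have hz0 : 0 < z := by linarith
  refine ⟨z, hz0, hz, fun x hx hxD => ?_⟩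
  exact sum_le_sum_of_add_mul_sub_le univ (f := fun i => klTerm β (y i + β)) (-log z)
    (fun i _ => klTerm_max_add_neg_log_mul_sub_le hβ (hyβ i) hz0 (hx i)) (hz.trans hxD.symm)
end
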